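/- For each n ≥ 3, there exists a short exact sequence of kV₄-modules 0 → W₃^{⊕(n+1)} → k^{⊕n} ⊕ kV₄^{⊕(n+1)} → W_{2n+1} → 0; consequently ppdim(W_{2n+1}) ≤ 2. -/

import Mathlib

open Multiplicative

/-! ## The Klein four-group and its group algebra -/

/-- The Klein four-group `V₄ = ⟨σ, τ⟩`. -/
abbrev V4 : Type := Multiplicative (ZMod 2) × Multiplicative (ZMod 2)

/-- The group algebra `kV₄`. -/
abbrev kV4 (k : Type) [Field k] : Type := MonoidAlgebra k V4

/-- The generator `σ` of `V₄`. -/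
def sigma4 : V4 := (ofAdd 1, 1)

/-- The generator `τ` of `V₄`. -/
def tau4 : V4 := (1, ofAdd 1)

/-- The element `a = σ + 1` of `kV₄` (in characteristic 2, `σ + 1 = σ - 1`). -/
noncomputable def aElt (k : Type) [Field k] : kV4 k := MonoidAlgebra.of k V4 sigma4 + 1

/-- The element `b = τ + 1` of `kV₄`. -/
noncomputable def bElt (k : Type) [Field k] : kV4 k := MonoidAlgebra.of k V4 tau4 + 1

/-! ## Building representations of `V₄` -/

/-- A monoid hom out of `Multiplicative (ZMod 2)` determined by an involution. -/
noncomputable def involHom {M : Type} [Monoid M] (S : M) (hS : S * S = 1) :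
    Multiplicative (ZMod 2) →* M where
  toFun g := S ^ (toAdd g).val
  map_one' := by simp
  map_mul' x y := by
    have h2 : S ^ 2 = 1 := by rwa [pow_two]
    have key : ∀ m : ℕ, S ^ (m % 2) = S ^ m := by
      intro m
      conv_rhs => rw [← Nat.div_add_mod m 2]
      rw [pow_add, pow_mul, h2, one_pow, one_mul]
    show S ^ (toAdd (x * y)).val = S ^ (toAdd x).val * S ^ (toAdd y).val
    rw [toAdd_mul, ZMod.val_add, key, pow_add]

/-- The representation of `V₄` determined by two commuting involutions `S` (the action
of `σ`) and `T` (the action of `τ`). -/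
noncomputable def kleinRep (k : Type) [Field k] {V : Type} [AddCommGroup V] [Module k V]
    (S T : Module.End k V) (hS : S * S = 1) (hT : T * T = 1) (hST : S * T = T * S) :
    Representation k V4 V :=
  MonoidHom.noncommCoprod (involHom S hS) (involHom T hT)
    (fun _ _ => Commute.pow_pow (show Commute S T from hST) _ _)

section Pair

variable (k : Type) [Field k]

/-- The endomorphism `(u, v) ↦ (0, f u)` of `(I → k) × (J → k)`. -/
noncomputable def auxEnd {I J : Type} (f : (I → k) →ₗ[k] (J → k)) :
    Module.End k ((I → k) × (J → k)) :=
  (LinearMap.inr k (I → k) (J → k)).comp (f.comp (LinearMap.fst k (I → k) (J → k)))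

lemma auxEnd_mul {I J : Type} (f g : (I → k) →ₗ[k] (J → k)) :
    auxEnd k f * auxEnd k g = 0 := by
  apply LinearMap.ext
  intro x
  simp [auxEnd, Module.End.mul_apply]

lemma end_add_self {V : Type} [AddCommGroup V] [Module k V] [CharP k 2]
    (A : Module.End k V) : A + A = 0 := by
  rw [← two_smul k A]
  have h2 : (2 : k) = 0 := by exact_mod_cast CharP.cast_eq_zero k 2
  rw [h2, zero_smul]

lemma one_add_sq [CharP k 2] {V : Type} [AddCommGroup V] [Module k V]
    (A : Module.End k V) (hA : A * A = 0) : (1 + A) * (1 + A) = 1 := by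
  have h : (1 + A) * (1 + A) = 1 + (A + A) + A * A := by noncomm_ring
  rw [h, end_add_self, hA, add_zero, add_zero]

lemma one_add_comm {V : Type} [AddCommGroup V] [Module k V]
    (A B : Module.End k V) (hAB : A * B = 0) (hBA : B * A = 0) :
    (1 + A) * (1 + B) = (1 + B) * (1 + A) := by
  have h1 : (1 + A) * (1 + B) = 1 + A + B + A * B := by noncomm_ring
  have h2 : (1 + B) * (1 + A) = 1 + A + B + B * A := by noncomm_ring
  rw [h1, h2, hAB, hBA]

/-- The representation of `V₄` on `(I → k) × (J → k)` (`I` indexing the `u`-basis and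
`J` the `v`-basis) on which `a` acts by `(u, v) ↦ (0, f u)` and `b` acts by
`(u, v) ↦ (0, g u)`; equivalently `σ = 1 + a`, `τ = 1 + b`. -/
noncomputable def pairRep [CharP k 2] (I J : Type) (f g : (I → k) →ₗ[k] (J → k)) :
    Representation k V4 ((I → k) × (J → k)) :=
  kleinRep k (1 + auxEnd k f) (1 + auxEnd k g)
    (one_add_sq k _ (auxEnd_mul k f f)) (one_add_sq k _ (auxEnd_mul k g g))
    (one_add_comm k _ _ (auxEnd_mul k f g) (auxEnd_mul k g f))

end Pair

/-! ## The indecomposable `kV₄`-modules -/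

section Modules

variable (k : Type) [Field k] [CharP k 2]

/-- `a`-action for `M_{2n+1}`: `a • u_i = v_{i-1}` for `1 ≤ i ≤ n`; here `u_{i+1}` is
indexed by `i : Fin n` and `v_j` by `j : Fin (n+1)`. -/
noncomputable def MaMap (n : ℕ) : (Fin n → k) →ₗ[k] (Fin (n + 1) → k) :=
  LinearMap.pi fun j =>
    if h : (j : ℕ) < n then LinearMap.proj (⟨(j : ℕ), h⟩ : Fin n) else 0

/-- `b`-action for `M_{2n+1}`: `b • u_i = v_i` for `1 ≤ i ≤ n`. -/
noncomputable def MbMap (n : ℕ) : (Fin n → k) →ₗ[k] (Fin (n + 1) → k) :=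
  LinearMap.pi fun j =>
    if _ : (j : ℕ) = 0 then 0
    else LinearMap.proj (⟨(j : ℕ) - 1, by have := j.isLt; omega⟩ : Fin n)

/-- The representation `M_{2n+1}`. -/
noncomputable def MRep (n : ℕ) : Representation k V4 ((Fin n → k) × (Fin (n + 1) → k)) :=
  pairRep k (Fin n) (Fin (n + 1)) (MaMap k n) (MbMap k n)

/-- The `kV₄`-module `M_{2n+1}`. -/
@[reducible] noncomputable def Mmod (n : ℕ) := (MRep k n).asModule

/-- `a`-action for `W_{2n+1}`: `a • u_i = v_i` for `1 ≤ i ≤ n`, `a • u_0 = 0`; here `u_i`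
is indexed by `i : Fin (n+1)` and `v_{j+1}` by `j : Fin n`. -/
noncomputable def WaMap (n : ℕ) : (Fin (n + 1) → k) →ₗ[k] (Fin n → k) :=
  LinearMap.pi fun j =>
    LinearMap.proj (⟨(j : ℕ) + 1, by have := j.isLt; omega⟩ : Fin (n + 1))

/-- `b`-action for `W_{2n+1}`: `b • u_i = v_{i+1}` for `0 ≤ i ≤ n-1`, `b • u_n = 0`. -/
noncomputable def WbMap (n : ℕ) : (Fin (n + 1) → k) →ₗ[k] (Fin n → k) :=
  LinearMap.pi fun j =>
    LinearMap.proj (⟨(j : ℕ), by have := j.isLt; omega⟩ : Fin (n + 1))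

/-- The representation `W_{2n+1}`. -/
noncomputable def WRep (n : ℕ) : Representation k V4 ((Fin (n + 1) → k) × (Fin n → k)) :=
  pairRep k (Fin (n + 1)) (Fin n) (WaMap k n) (WbMap k n)

/-- The `kV₄`-module `W_{2n+1}`. -/
@[reducible] noncomputable def Wmod (n : ℕ) := (WRep k n).asModule

/-- `b`-action for `E_{f,n}` with `f ≠ ∞`, where `m = n·deg f` and `α` is the list of lower
coefficients of `f^n`: `b • u_i = v_{i+1}` for `i ≤ m-2` and `b • u_{m-1} = Σ α_i v_i`. -/
noncomputable def EbMap (m : ℕ) (α : Fin m → k) : (Fin m → k) →ₗ[k] (Fin m → k) :=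
  LinearMap.pi fun j =>
    (if _ : (j : ℕ) = 0 then 0
     else LinearMap.proj (⟨(j : ℕ) - 1, by have := j.isLt; omega⟩ : Fin m))
    + α j • LinearMap.proj (⟨m - 1, by have := j.isLt; omega⟩ : Fin m)

/-- The representation `E_{f,n}` (for `f ≠ ∞`), where `a • u_i = v_i`. -/
noncomputable def ERep (m : ℕ) (α : Fin m → k) : Representation k V4 ((Fin m → k) × (Fin m → k)) :=
  pairRep k (Fin m) (Fin m) LinearMap.id (EbMap k m α)

/-- The `kV₄`-module `E_{f,n}` (for `f ≠ ∞`), presented by the coefficient vector `α` of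
`f^n` below its leading term, with `m = n·deg f`. -/
@[reducible] noncomputable def Emod (m : ℕ) (α : Fin m → k) := (ERep k m α).asModule

/-- `a`-action for `E_{∞,n}`: `a • u_i = v_{i-1}` for `1 ≤ i ≤ n-1`, `a • u_0 = 0`. -/
noncomputable def EinfaMap (n : ℕ) : (Fin n → k) →ₗ[k] (Fin n → k) :=
  LinearMap.pi fun j =>
    if h : (j : ℕ) + 1 < n then LinearMap.proj (⟨(j : ℕ) + 1, h⟩ : Fin n) else 0

/-- The representation `E_{∞,n}`, where `b • u_i = v_i`. -/
noncomputable def EinfRep (n : ℕ) : Representation k V4 ((Fin n → k) × (Fin n → k)) :=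
  pairRep k (Fin n) (Fin n) (EinfaMap k n) LinearMap.id

/-- The `kV₄`-module `E_{∞,n}`. -/
@[reducible] noncomputable def Einfmod (n : ℕ) := (EinfRep k n).asModule

/-- The trivial `kV₄`-module `k`. -/
@[reducible] noncomputable def trivMod := (Representation.trivial k (G := V4) (V := k)).asModule

/-- The `kV₄`-module `E_t = E_{t,1}`. -/
@[reducible] noncomputable def EtMod := Emod k 1 0

/-- The `kV₄`-module `E_{t+1} = E_{t+1,1}`. -/
@[reducible] noncomputable def Et1Mod := Emod k 1 1

/-- The `kV₄`-module `E_∞ = E_{∞,1}`. -/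
@[reducible] noncomputable def EinfMod := Einfmod k 1

end Modules

/-! ## Permutation modules, resolutions and the permutation dimension -/

section Perm

variable (k : Type) [Field k]

/-- A `kV₄`-module is a permutation module if it is isomorphic to `k[X]` for some finite
`V₄`-set `X` (equivalently, it admits a finite `k`-basis permuted by `V₄`). -/
def IsPermMod (M : Type) [AddCommMonoid M] [Module (kV4 k) M] : Prop :=
  ∃ (ι : Type) (_ : Fintype ι) (act : MulAction V4 ι),
    Nonempty (M ≃ₗ[kV4 k] (@Representation.ofMulAction k _ V4 _ ι act).asModule)

/-- A permutation resolution `0 → P_n → ⋯ → P_1 → P_0 → M → 0` of length at most `n`: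
an exact sequence of `kV₄`-modules in which every `P_i` is a permutation module and
`P_i = 0` for `i > n`. -/
structure PermRes (M : Type) [AddCommMonoid M] [Module (kV4 k) M] (n : ℕ) where
  P : ℕ → Type
  [acm : ∀ i, AddCommMonoid (P i)]
  [mod : ∀ i, Module (kV4 k) (P i)]
  d : ∀ i, P (i + 1) →ₗ[kV4 k] P i
  ε : P 0 →ₗ[kV4 k] M
  perm : ∀ i, IsPermMod k (P i)
  surj : Function.Surjective ε
  exact_zero : LinearMap.ker ε = LinearMap.range (d 0)
  exact_succ : ∀ i, LinearMap.ker (d i) = LinearMap.range (d (i + 1))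
  bounded : ∀ i, n < i → ∀ x : P i, x = 0

/-- The permutation dimension of a `kV₄`-module: the least length of a permutation
resolution. -/
noncomputable def ppdim (M : Type) [AddCommMonoid M] [Module (kV4 k) M] : ℕ :=
  sInf {n : ℕ | Nonempty (PermRes k M n)}

/-- `SES k A B C` asserts the existence of a short exact sequence
`0 → A → B → C → 0` of `kV₄`-modules. -/
def SES (A B C : Type) [AddCommMonoid A] [AddCommMonoid B] [AddCommMonoid C]
    [Module (kV4 k) A] [Module (kV4 k) B] [Module (kV4 k) C] : Prop :=
  ∃ (f : A →ₗ[kV4 k] B) (g : B →ₗ[kV4 k] C),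
    Function.Injective f ∧ Function.Surjective g ∧ LinearMap.range f = LinearMap.ker g

end Perm

/-- A nonzero module is indecomposable if it is not the (internal) direct sum of two
nonzero submodules. -/
def IsIndecomposable (R M : Type) [Ring R] [AddCommMonoid M] [Module R M] : Prop :=
  Nontrivial M ∧ ∀ N₁ N₂ : Submodule R M, IsCompl N₁ N₂ → N₁ = ⊥ ∨ N₂ = ⊥

/-- A `kV₄`-module is projective-free if it has no direct summand isomorphic to the
regular module `kV₄`. -/
def IsProjFree (k : Type) [Field k] (M : Type) [AddCommMonoid M] [Module (kV4 k) M] : Prop :=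
  ¬ ∃ (N N' : Submodule (kV4 k) M), IsCompl N N' ∧ Nonempty (N ≃ₗ[kV4 k] kV4 k)


/-!
Write `a = σ + 1` and `b = τ + 1`, so that `kV₄ = k[a, b]/(a², b²)` has `k`-basis `1, a, b, ab`,
and `a u_i = v_i`, `b u_i = v_{i+1}` in `W_{2n+1}`. Sending the `i`-th copy of `kV₄` onto `u_i` and
the `j`-th copy of `k` onto the socle vector `v_{j+1}` presents `W_{2n+1}`; an element `(c, x)`
lies in the kernel exactly when every `x_i` lies in the augmentation ideal and `c` is determined by
the `a`- and `b`-coordinates of the `x_i`. The augmentation ideal is isomorphic to `W₃`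
(`u₀ ↦ a`, `u₁ ↦ b`, `v₁ ↦ ab`), which gives the short exact sequence. Finally `W₃` is the quotient
of the permutation module `k[V₄/⟨σ⟩] ⊕ k[V₄/⟨τ⟩] ≅ E_∞ ⊕ E_t` by a diagonal copy of `k`, and
splicing yields a permutation resolution of length two.
-/

open MonoidAlgebra

lemma v4_cases (g : V4) : g = 1 ∨ g = sigma4 ∨ g = tau4 ∨ g = sigma4 * tau4 := by
  revert g
  decide

lemma of_smul_eq_of_sigma4_tau4 {k M ι : Type} [Field k] [AddCommMonoid M] [Module (kV4 k) M]
    [MulAction V4 ι] (b : ι → M) (hσ : ∀ i, of k V4 sigma4 • b i = b (sigma4 • i))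
    (hτ : ∀ i, of k V4 tau4 • b i = b (tau4 • i)) (g : V4) (i : ι) :
    of k V4 g • b i = b (g • i) := by
  rcases v4_cases g with rfl | rfl | rfl | rfl
  · rw [map_one, one_smul, one_smul]
  · exact hσ i
  · exact hτ i
  · rw [MonoidHom.map_mul, mul_smul, mul_smul, hτ, hσ]

section Generators

variable {k : Type} [Field k] {M N : Type} [AddCommGroup M] [Module k M] [Module (kV4 k) M]
  [AddCommGroup N] [Module k N] [Module (kV4 k) N]

lemma map_of_smul_of_aElt_bElt (f : M →ₗ[k] N) (ha : ∀ x, f (aElt k • x) = aElt k • f x)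
    (hb : ∀ x, f (bElt k • x) = bElt k • f x) (g : V4) (x : M) :
    f (of k V4 g • x) = of k V4 g • f x := by
  have hσ : ∀ y, f (of k V4 sigma4 • y) = of k V4 sigma4 • f y := fun y => by
    rw [show of k V4 sigma4 = aElt k - 1 by rw [aElt, add_sub_cancel_right]]
    simp only [sub_smul, one_smul, map_sub, ha]
  have hτ : ∀ y, f (of k V4 tau4 • y) = of k V4 tau4 • f y := fun y => by
    rw [show of k V4 tau4 = bElt k - 1 by rw [bElt, add_sub_cancel_right]]
    simp only [sub_smul, one_smul, map_sub, hb]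
  rcases v4_cases g with rfl | rfl | rfl | rfl
  · rw [map_one, one_smul, one_smul]
  · exact hσ x
  · exact hτ x
  · rw [map_mul, mul_smul, mul_smul, hσ, hτ]

variable [IsScalarTower k (kV4 k) M] [IsScalarTower k (kV4 k) N]

noncomputable def LinearMap.toKV4 (f : M →ₗ[k] N) (ha : ∀ x, f (aElt k • x) = aElt k • f x)
    (hb : ∀ x, f (bElt k • x) = bElt k • f x) : M →ₗ[kV4 k] N :=
  equivariantOfLinearOfComm f fun g x => by
    simpa only [of_apply] using map_of_smul_of_aElt_bElt f ha hb g x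

@[simp] lemma LinearMap.toKV4_apply (f : M →ₗ[k] N) (ha) (hb) (x : M) : f.toKV4 ha hb x = f x :=
  rfl

end Generators

section AsModuleProd

variable {k G V W : Type} [CommSemiring k] [Monoid G] [AddCommMonoid V] [Module k V]
  [AddCommMonoid W] [Module k W] (ρ : Representation k G (V × W))

@[simp] lemma Representation.asModule_zero_fst : (0 : ρ.asModule).1 = 0 := rfl
@[simp] lemma Representation.asModule_zero_snd : (0 : ρ.asModule).2 = 0 := rfl
@[simp] lemma Representation.asModule_add_fst (x y : ρ.asModule) : (x + y).1 = x.1 + y.1 := rfl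
@[simp] lemma Representation.asModule_add_snd (x y : ρ.asModule) : (x + y).2 = x.2 + y.2 := rfl

@[simp] lemma Representation.asModule_smul_fst (c : k) (x : ρ.asModule) : (c • x).1 = c • x.1 :=
  rfl

@[simp] lemma Representation.asModule_smul_snd (c : k) (x : ρ.asModule) : (c • x).2 = c • x.2 :=
  rfl

@[simp] lemma Representation.asModuleEquiv_symm_fst (p : V × W) :
    (ρ.asModuleEquiv.symm p).1 = p.1 :=
  rfl

@[simp] lemma Representation.asModuleEquiv_symm_snd (p : V × W) :
    (ρ.asModuleEquiv.symm p).2 = p.2 :=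
  rfl

end AsModuleProd

section Actions

variable {k : Type} [Field k]

lemma kleinRep_sigma4 {V : Type} [AddCommGroup V] [Module k V] (S T : Module.End k V)
    (hS : S * S = 1) (hT : T * T = 1) (hST : S * T = T * S) :
    kleinRep k S T hS hT hST sigma4 = S := by
  simp [kleinRep, sigma4, involHom, show ZMod.val (1 : ZMod 2) = 1 from rfl]

lemma kleinRep_tau4 {V : Type} [AddCommGroup V] [Module k V] (S T : Module.End k V)
    (hS : S * S = 1) (hT : T * T = 1) (hST : S * T = T * S) :
    kleinRep k S T hS hT hST tau4 = T := by
  simp [kleinRep, tau4, involHom, show ZMod.val (1 : ZMod 2) = 1 from rfl]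

lemma involHom_ofAdd_one {G : Type} [Monoid G] (S : G) (hS : S * S = 1) :
    involHom S hS (ofAdd 1) = S := by
  simp [involHom, show ZMod.val (1 : ZMod 2) = 1 from rfl]

lemma EinfaMap_one : EinfaMap k 1 = 0 := by
  ext
  simp [EinfaMap]

lemma EbMap_one_zero : EbMap k 1 0 = 0 := by
  ext
  simp [EbMap]

variable [CharP k 2]

instance : CharP (kV4 k) 2 := charP_of_injective_algebraMap (algebraMap k (kV4 k)).injective 2

lemma of_sigma4_eq : of k V4 sigma4 = aElt k + 1 := by
  rw [aElt, add_assoc, CharTwo.add_self_eq_zero, add_zero]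

lemma of_tau4_eq : of k V4 tau4 = bElt k + 1 := by
  rw [bElt, add_assoc, CharTwo.add_self_eq_zero, add_zero]

lemma aElt_mul_self : aElt k * aElt k = 0 := by
  rw [aElt, CharTwo.add_mul_self, ← map_mul, show sigma4 * sigma4 = 1 by decide, map_one,
    one_mul, CharTwo.add_self_eq_zero]

lemma bElt_mul_self : bElt k * bElt k = 0 := by
  rw [bElt, CharTwo.add_mul_self, ← map_mul, show tau4 * tau4 = 1 by decide, map_one,
    one_mul, CharTwo.add_self_eq_zero]

lemma aElt_smul_pairRep {I J : Type} (f g : (I → k) →ₗ[k] (J → k))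
    (x : (pairRep k I J f g).asModule) :
    aElt k • x = (pairRep k I J f g).asModuleEquiv.symm (0, f x.1) := by
  change (pairRep k I J f g).asAlgebraHom (aElt k) x = _
  rw [aElt, map_add, map_one, Representation.asAlgebraHom_of, pairRep, kleinRep_sigma4]
  -- `@id` retypes `x` as a vector of the underlying space, so that `ext` and `simp` apply
  change (1 + auxEnd k f + 1) (@id ((I → k) × (J → k)) x) = _
  ext i <;> simp [auxEnd, add_right_comm _ (f _ _), CharTwo.add_self_eq_zero] <;> rfl

lemma bElt_smul_pairRep {I J : Type} (f g : (I → k) →ₗ[k] (J → k))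
    (x : (pairRep k I J f g).asModule) :
    bElt k • x = (pairRep k I J f g).asModuleEquiv.symm (0, g x.1) := by
  change (pairRep k I J f g).asAlgebraHom (bElt k) x = _
  rw [bElt, map_add, map_one, Representation.asAlgebraHom_of, pairRep, kleinRep_tau4]
  change (1 + auxEnd k g + 1) (@id ((I → k) × (J → k)) x) = _
  ext i <;> simp [auxEnd, add_right_comm _ (g _ _), CharTwo.add_self_eq_zero] <;> rfl

lemma aElt_smul_wmod {n : ℕ} (x : Wmod k n) :
    aElt k • x = (WRep k n).asModuleEquiv.symm (0, fun j => x.1 j.succ) :=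
  aElt_smul_pairRep _ _ x

lemma bElt_smul_wmod {n : ℕ} (x : Wmod k n) :
    bElt k • x = (WRep k n).asModuleEquiv.symm (0, fun j => x.1 j.castSucc) :=
  bElt_smul_pairRep _ _ x

lemma aElt_smul_einfMod (x : EinfMod k) : aElt k • x = 0 := by
  refine (aElt_smul_pairRep (EinfaMap k 1) LinearMap.id x).trans ?_
  rw [EinfaMap_one, LinearMap.zero_apply, Prod.mk_zero_zero, map_zero]
  rfl

lemma bElt_smul_einfMod (x : EinfMod k) :
    bElt k • x = (EinfRep k 1).asModuleEquiv.symm (0, x.1) :=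
  bElt_smul_pairRep _ _ x

lemma aElt_smul_etMod (x : EtMod k) : aElt k • x = (ERep k 1 0).asModuleEquiv.symm (0, x.1) :=
  aElt_smul_pairRep _ _ x

lemma bElt_smul_etMod (x : EtMod k) : bElt k • x = 0 := by
  refine (bElt_smul_pairRep LinearMap.id (EbMap k 1 0) x).trans ?_
  rw [EbMap_one_zero, LinearMap.zero_apply, Prod.mk_zero_zero, map_zero]
  rfl

lemma aElt_smul_trivMod (c : trivMod k) : aElt k • c = 0 := by
  change (Representation.trivial k V4 k).asAlgebraHom (aElt k) (@id k c) = 0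
  simp [aElt, CharTwo.add_self_eq_zero]

lemma bElt_smul_trivMod (c : trivMod k) : bElt k • c = 0 := by
  change (Representation.trivial k V4 k).asAlgebraHom (bElt k) (@id k c) = 0
  simp [bElt, CharTwo.add_self_eq_zero]

end Actions

section Coordinates

variable {k : Type} [Field k]

/-- The coefficient of `στ`. In the basis `1, a, b, ab` of `kV₄` it is the coordinate of `ab`,
and the other three coordinates of `x` are `abCoeff (a * b * x)`, `abCoeff (b * x)` and
`abCoeff (a * x)`. -/
noncomputable def abCoeff : kV4 k →ₗ[k] k := (MonoidAlgebra.basis V4 k).coord (sigma4 * tau4)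

lemma abCoeff_apply (x : kV4 k) : abCoeff x = x.coeff (sigma4 * tau4) := rfl

lemma abCoeff_single (g : V4) (c : k) :
    abCoeff (single g c) = if g = sigma4 * tau4 then c else 0 := by
  simp [abCoeff_apply, coeff_single, Finsupp.single_apply]

lemma abCoeff_algebraMap_mul (c : k) (x : kV4 k) :
    abCoeff (algebraMap k (kV4 k) c * x) = c * abCoeff x := by
  rw [← Algebra.smul_def, map_smul, smul_eq_mul]

lemma abCoeff_mul_algebraMap (x : kV4 k) (c : k) :
    abCoeff (x * algebraMap k (kV4 k) c) = c * abCoeff x := by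
  rw [mul_comm, abCoeff_algebraMap_mul]

lemma abCoeff_aElt : abCoeff (aElt k) = 0 := by
  simp [aElt, one_def, abCoeff_single, show (1 : V4) ≠ sigma4 * tau4 by decide,
    show sigma4 ≠ sigma4 * tau4 by decide]

lemma abCoeff_bElt : abCoeff (bElt k) = 0 := by
  simp [bElt, one_def, abCoeff_single, show (1 : V4) ≠ sigma4 * tau4 by decide,
    show tau4 ≠ sigma4 * tau4 by decide]

lemma abCoeff_aElt_mul_bElt : abCoeff (aElt k * bElt k) = 1 := by
  simp [aElt, bElt, add_mul, mul_add, one_def, abCoeff_single,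
    show (1 : V4) ≠ sigma4 * tau4 by decide, show tau4 ≠ sigma4 * tau4 by decide,
    show sigma4 ≠ sigma4 * tau4 by decide]

lemma coeff_eq_abCoeff_of_mul (x : kV4 k) (g : V4) :
    x.coeff g = abCoeff (of k V4 (sigma4 * tau4 * g⁻¹) * x) := by
  have h := coeff_single_mul_mul x 1 (sigma4 * tau4 * g⁻¹) g
  rwa [inv_mul_cancel_right, one_mul, eq_comm] at h

lemma eq_zero_of_abCoeff_mul_eq_zero {x : kV4 k} (h : abCoeff x = 0)
    (ha : abCoeff (aElt k * x) = 0) (hb : abCoeff (bElt k * x) = 0)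
    (hab : abCoeff (aElt k * bElt k * x) = 0) : x = 0 := by
  have hσ : of k V4 sigma4 = aElt k - 1 := by rw [aElt, add_sub_cancel_right]
  have hτ : of k V4 tau4 = bElt k - 1 := by rw [bElt, add_sub_cancel_right]
  refine coeff_injective (Finsupp.ext fun g => ?_)
  rw [coeff_eq_abCoeff_of_mul, coeff_zero, Finsupp.coe_zero, Pi.zero_apply]
  rcases v4_cases g with rfl | rfl | rfl | rfl
  · rw [inv_one, mul_one, MonoidHom.map_mul, hσ, hτ,
      show (aElt k - 1) * (bElt k - 1) * x = aElt k * bElt k * x - aElt k * x - bElt k * x + x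
        by ring, map_add, map_sub, map_sub, hab, ha, hb, h]
    ring
  · rw [show sigma4 * tau4 * sigma4⁻¹ = tau4 by decide, hτ, sub_mul, one_mul, map_sub, hb, h,
      sub_zero]
  · rw [show sigma4 * tau4 * tau4⁻¹ = sigma4 by decide, hσ, sub_mul, one_mul, map_sub, ha, h,
      sub_zero]
  · rw [mul_inv_cancel, map_one, one_mul, h]

end Coordinates

section Syzygy

variable {k : Type} [Field k] [CharP k 2]

/-- An isomorphism of `W₃` onto the augmentation ideal of `kV₄`. -/
noncomputable def w3ToKV4 : Wmod k 1 →ₗ[kV4 k] kV4 k :=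
  LinearMap.toKV4
    { toFun := fun m => algebraMap k (kV4 k) (m.1 0) * aElt k
        + algebraMap k (kV4 k) (m.1 1) * bElt k + algebraMap k (kV4 k) (m.2 0) * (aElt k * bElt k)
      map_add' := fun m m' => by
        simp only [Representation.asModule_add_fst, Representation.asModule_add_snd, Pi.add_apply,
          map_add]
        ring
      map_smul' := fun c m => by
        simp only [Representation.asModule_smul_fst, Representation.asModule_smul_snd,
          Pi.smul_apply, smul_eq_mul, map_mul, Algebra.smul_def, RingHom.id_apply]
        ring }
    (fun m => by
      simp only [LinearMap.coe_mk, AddHom.coe_mk, aElt_smul_wmod, smul_eq_mul,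
        Representation.asModuleEquiv_symm_fst, Representation.asModuleEquiv_symm_snd,
        Pi.zero_apply, map_zero, Fin.succ_zero_eq_one]
      linear_combination (-(algebraMap k (kV4 k) (m.1 0) + algebraMap k (kV4 k) (m.2 0) * bElt k))
        * aElt_mul_self (k := k))
    (fun m => by
      simp only [LinearMap.coe_mk, AddHom.coe_mk, bElt_smul_wmod, smul_eq_mul,
        Representation.asModuleEquiv_symm_fst, Representation.asModuleEquiv_symm_snd,
        Pi.zero_apply, map_zero, Fin.castSucc_zero]
      linear_combination (-(algebraMap k (kV4 k) (m.1 1) + algebraMap k (kV4 k) (m.2 0) * aElt k))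
        * bElt_mul_self (k := k))

lemma abCoeff_w3ToKV4 (m : Wmod k 1) : abCoeff (w3ToKV4 m) = m.2 0 := by
  simp only [w3ToKV4, LinearMap.toKV4_apply, LinearMap.coe_mk, AddHom.coe_mk, map_add,
    abCoeff_algebraMap_mul, abCoeff_aElt, abCoeff_bElt, abCoeff_aElt_mul_bElt]
  ring

lemma abCoeff_aElt_mul_w3ToKV4 (m : Wmod k 1) : abCoeff (aElt k * w3ToKV4 m) = m.1 1 := by
  rw [← smul_eq_mul, ← map_smul, abCoeff_w3ToKV4, aElt_smul_wmod]
  rfl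

lemma abCoeff_bElt_mul_w3ToKV4 (m : Wmod k 1) : abCoeff (bElt k * w3ToKV4 m) = m.1 0 := by
  rw [← smul_eq_mul, ← map_smul, abCoeff_w3ToKV4, bElt_smul_wmod]
  rfl

lemma abCoeff_aElt_mul_bElt_mul_w3ToKV4 (m : Wmod k 1) :
    abCoeff (aElt k * bElt k * w3ToKV4 m) = 0 := by
  rw [mul_assoc, ← smul_eq_mul, ← smul_eq_mul, ← map_smul, ← map_smul, abCoeff_w3ToKV4,
    aElt_smul_wmod, bElt_smul_wmod]
  rfl

lemma w3ToKV4_injective : Function.Injective (w3ToKV4 (k := k)) := by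
  refine (injective_iff_map_eq_zero _).2 fun m hm => ?_
  have h₀ := abCoeff_bElt_mul_w3ToKV4 m
  have h₁ := abCoeff_aElt_mul_w3ToKV4 m
  have h₂ := abCoeff_w3ToKV4 m
  rw [hm, mul_zero, map_zero] at h₀ h₁
  rw [hm, map_zero] at h₂
  exact Prod.ext (funext (Fin.forall_fin_two.2 ⟨h₀.symm, h₁.symm⟩))
    (funext fun j => Fin.fin_one_eq_zero j ▸ h₂.symm)

lemma exists_w3ToKV4_eq {x : kV4 k} (hx : abCoeff (aElt k * bElt k * x) = 0) :
    ∃ m, w3ToKV4 m = x := by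
  let m : Wmod k 1 := ((![abCoeff (bElt k * x), abCoeff (aElt k * x)], fun _ => abCoeff x) :
    (Fin 2 → k) × (Fin 1 → k))
  refine ⟨m, sub_eq_zero.1 (eq_zero_of_abCoeff_mul_eq_zero ?_ ?_ ?_ ?_)⟩ <;>
    simp only [mul_sub, map_sub, abCoeff_w3ToKV4, abCoeff_aElt_mul_w3ToKV4,
      abCoeff_bElt_mul_w3ToKV4, abCoeff_aElt_mul_bElt_mul_w3ToKV4, hx, sub_self] <;>
    exact sub_self _

end Syzygy

section ShortExactSequence

variable {k : Type} [Field k] [CharP k 2] {n : ℕ}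

noncomputable def wSyzygy :
    (Fin (n + 1) → Wmod k 1) →ₗ[kV4 k] (Fin n → trivMod k) × (Fin (n + 1) → kV4 k) :=
  LinearMap.toKV4
    { toFun := fun m => (fun j => (Representation.trivial k V4 k).asModuleEquiv.symm
          ((m j.succ).1 0 + (m j.castSucc).1 1), fun i => w3ToKV4 (m i))
      map_add' := fun m m' => by
        refine Prod.ext (funext fun j => ?_) (funext fun i => ?_)
        · simp only [Pi.add_apply, Representation.asModule_add_fst, add_add_add_comm, map_add]
          rfl
        · simp
      map_smul' := fun c m => by
        refine Prod.ext (funext fun j => ?_) (funext fun i => ?_)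
        · simp only [Pi.smul_apply, Representation.asModule_smul_fst, ← smul_add, map_smul]
          rfl
        · simp }
    (fun m => by
      refine Prod.ext (funext fun j => ?_) (funext fun i => ?_)
      · simp [aElt_smul_wmod, aElt_smul_trivMod]
      · simp [map_smul])
    (fun m => by
      refine Prod.ext (funext fun j => ?_) (funext fun i => ?_)
      · simp [bElt_smul_wmod, bElt_smul_trivMod]
      · simp [map_smul])

noncomputable def wPresentation :
    (Fin n → trivMod k) × (Fin (n + 1) → kV4 k) →ₗ[kV4 k] Wmod k n :=
  LinearMap.toKV4
    ((WRep k n).asModuleEquiv.symm.toLinearMap ∘ₗ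
      { toFun := fun x => (fun i => abCoeff (aElt k * bElt k * x.2 i),
          fun j => (Representation.trivial k V4 k).asModuleEquiv (x.1 j)
            + abCoeff (bElt k * x.2 j.succ) + abCoeff (aElt k * x.2 j.castSucc))
        map_add' := fun x y => by
          refine Prod.ext (funext fun i => ?_) (funext fun j => ?_)
          · simp [mul_add]
          · simp only [Prod.fst_add, Prod.snd_add, Pi.add_apply, mul_add, map_add]
            ring
        map_smul' := fun c x => by
          refine Prod.ext (funext fun i => ?_) (funext fun j => ?_)
          · simp
          · simp only [Prod.smul_fst, Prod.smul_snd, Pi.smul_apply, mul_smul_comm, map_smul,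
              smul_eq_mul, RingHom.id_apply, Prod.smul_mk]
            ring })
    (fun x => by
      have h₁ : ∀ y : kV4 k, aElt k * bElt k * (aElt k * y) = 0 := fun y => by
        linear_combination (bElt k * y) * aElt_mul_self (k := k)
      have h₂ : ∀ y : kV4 k, bElt k * (aElt k * y) = aElt k * bElt k * y := fun y => by ring
      have h₃ : ∀ y : kV4 k, aElt k * (aElt k * y) = 0 := fun y => by
        linear_combination y * aElt_mul_self (k := k)
      rw [LinearMap.comp_apply, LinearMap.comp_apply, LinearEquiv.coe_coe, aElt_smul_wmod]
      refine Prod.ext (funext fun i => ?_) (funext fun j => ?_)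
      · simp [h₁]
      · simp [h₂, h₃, aElt_smul_trivMod])
    (fun x => by
      have h₁ : ∀ y : kV4 k, aElt k * bElt k * (bElt k * y) = 0 := fun y => by
        linear_combination (aElt k * y) * bElt_mul_self (k := k)
      have h₂ : ∀ y : kV4 k, bElt k * (bElt k * y) = 0 := fun y => by
        linear_combination y * bElt_mul_self (k := k)
      have h₃ : ∀ y : kV4 k, aElt k * (bElt k * y) = aElt k * bElt k * y := fun y => by ring
      rw [LinearMap.comp_apply, LinearMap.comp_apply, LinearEquiv.coe_coe, bElt_smul_wmod]
      refine Prod.ext (funext fun i => ?_) (funext fun j => ?_)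
      · simp [h₁]
      · simp [h₂, h₃, bElt_smul_trivMod])

lemma wPresentation_apply (x : (Fin n → trivMod k) × (Fin (n + 1) → kV4 k)) :
    wPresentation x = (WRep k n).asModuleEquiv.symm (fun i => abCoeff (aElt k * bElt k * x.2 i),
      fun j => (Representation.trivial k V4 k).asModuleEquiv (x.1 j)
        + abCoeff (bElt k * x.2 j.succ) + abCoeff (aElt k * x.2 j.castSucc)) :=
  rfl

lemma wSyzygy_injective : Function.Injective (wSyzygy (k := k) (n := n)) := fun _ _ h =>
  funext fun i => w3ToKV4_injective (congr_fun (congrArg Prod.snd h) i)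

lemma wPresentation_surjective : Function.Surjective (wPresentation (k := k) (n := n)) := by
  intro w
  refine ⟨(fun j => (Representation.trivial k V4 k).asModuleEquiv.symm (w.2 j),
    fun i => algebraMap k (kV4 k) (w.1 i)), Prod.ext (funext fun i => ?_) (funext fun j => ?_)⟩ <;>
  simp only [wPresentation_apply, Representation.asModuleEquiv_symm_fst,
    Representation.asModuleEquiv_symm_snd, LinearEquiv.apply_symm_apply, abCoeff_mul_algebraMap,
    abCoeff_aElt_mul_bElt, abCoeff_aElt, abCoeff_bElt, mul_one, mul_zero, add_zero]

lemma exact_wSyzygy_wPresentation :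
    Function.Exact (wSyzygy (k := k) (n := n)) wPresentation := by
  intro y
  constructor
  · intro hy
    have hε : ∀ i, abCoeff (aElt k * bElt k * y.2 i) = 0 := fun i =>
      congrArg (fun w : Wmod k n => w.1 i) hy
    have hv : ∀ j, (Representation.trivial k V4 k).asModuleEquiv (y.1 j)
        + abCoeff (bElt k * y.2 j.succ) + abCoeff (aElt k * y.2 j.castSucc) = 0 := fun j =>
      congrArg (fun w : Wmod k n => w.2 j) hy
    choose m hm using fun i => exists_w3ToKV4_eq (hε i)
    refine ⟨m, Prod.ext (funext fun j => ?_) (funext hm)⟩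
    apply (Representation.trivial k V4 k).asModuleEquiv.injective
    change (m j.succ).1 0 + (m j.castSucc).1 1 = _
    rw [← abCoeff_bElt_mul_w3ToKV4, ← abCoeff_aElt_mul_w3ToKV4, hm, hm, eq_comm,
      ← CharTwo.add_eq_zero, ← add_assoc]
    exact hv j
  · rintro ⟨m, rfl⟩
    refine Prod.ext (funext fun i => ?_) (funext fun j => ?_)
    · exact abCoeff_aElt_mul_bElt_mul_w3ToKV4 (m i)
    · change (m j.succ).1 0 + (m j.castSucc).1 1 + abCoeff (bElt k * w3ToKV4 (m j.succ))
        + abCoeff (aElt k * w3ToKV4 (m j.castSucc)) = 0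
      rw [abCoeff_bElt_mul_w3ToKV4, abCoeff_aElt_mul_w3ToKV4, add_assoc,
        CharTwo.add_self_eq_zero]

end ShortExactSequence

section PermBasis

variable (k : Type) [Field k]

def HasPermBasis (M : Type) [AddCommMonoid M] [Module k M] [Module (kV4 k) M] : Prop :=
  ∃ (ι : Type) (_ : Fintype ι) (_ : MulAction V4 ι) (b : Module.Basis ι k M),
    ∀ (g : V4) (i : ι), of k V4 g • b i = b (g • i)

variable {k} {M N : Type} [AddCommMonoid M] [Module k M] [Module (kV4 k) M] [AddCommMonoid N]
  [Module k N] [Module (kV4 k) N]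

lemma HasPermBasis.isPermMod [IsScalarTower k (kV4 k) M] (h : HasPermBasis k M) :
    IsPermMod k M := by
  obtain ⟨ι, _, _, b, hb⟩ := h
  let ρ := Representation.ofMulAction k V4 ι
  let e : M ≃ₗ[k] ρ.asModule :=
    (b.equiv (MonoidAlgebra.basis ι k) (Equiv.refl ι)).trans ρ.asModuleEquiv.symm
  have he : ∀ (g : V4) (x : M), e (single g (1 : k) • x) = single g (1 : k) • e x := fun g x => by
    have key : e.toLinearMap ∘ₗ GroupSMul.linearMap k M g =
        GroupSMul.linearMap k ρ.asModule g ∘ₗ e.toLinearMap := b.ext fun i => by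
      simp only [LinearMap.comp_apply, GroupSMul.linearMap_apply, ← of_apply, hb]
      simp only [LinearEquiv.coe_coe, LinearEquiv.trans_apply, Module.Basis.equiv_apply,
        Equiv.refl_apply, basis_apply, of_apply, Representation.single_smul,
        LinearEquiv.apply_symm_apply, Representation.ofMulAction_single, one_smul, ρ, e]
      rfl
    exact LinearMap.congr_fun key x
  exact ⟨ι, inferInstance, inferInstance, ⟨{ equivariantOfLinearOfComm e.toLinearMap he with
    invFun := e.symm, left_inv := e.left_inv, right_inv := e.right_inv }⟩⟩

lemma HasPermBasis.prod (hM : HasPermBasis k M) (hN : HasPermBasis k N) :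
    HasPermBasis k (M × N) := by
  obtain ⟨ι, _, _, b, hb⟩ := hM
  obtain ⟨κ, _, _, c, hc⟩ := hN
  refine ⟨ι ⊕ κ, inferInstance, inferInstance, b.prod c, fun g i => ?_⟩
  rcases i with i | i <;> ext <;> simp [hb, hc, -of_apply]

lemma HasPermBasis.pi (κ : Type) [Fintype κ] (h : HasPermBasis k M) : HasPermBasis k (κ → M) := by
  classical
  obtain ⟨ι, _, _, b, hb⟩ := h
  refine ⟨Σ _ : κ, ι, inferInstance, inferInstance, Pi.basis fun _ => b, fun g ⟨j, i⟩ => ?_⟩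
  rw [Pi.basis_apply, Pi.basis_apply, ← Pi.single_smul', hb]
  rfl

lemma hasPermBasis_punit : HasPermBasis k PUnit :=
  ⟨Empty, inferInstance, .compHom _ (1 : V4 →* Equiv.Perm Empty), .empty _, fun _ i => i.elim⟩

lemma hasPermBasis_kV4 : HasPermBasis k (kV4 k) :=
  ⟨V4, inferInstance, inferInstance, MonoidAlgebra.basis V4 k, fun g h => by
    simp [smul_eq_mul, ← of_apply, ← map_mul]⟩

lemma hasPermBasis_trivMod : HasPermBasis k (trivMod k) :=
  ⟨Unit, inferInstance, inferInstance,
    (Module.Basis.singleton Unit k).map (Representation.trivial k V4 k).asModuleEquiv.symm,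
    fun g i => by
      simp only [of_apply, Module.Basis.map_apply, Representation.single_smul,
        Representation.isTrivial_def, LinearEquiv.apply_symm_apply, LinearMap.id_coe, id_eq,
        one_smul]
      rfl⟩

end PermBasis

section TwoPoint

variable {k : Type} [Field k] [CharP k 2]

noncomputable abbrev swapAction (φ : V4 →* Multiplicative (ZMod 2)) : MulAction V4 (Fin 2) :=
  .compHom _ ((involHom (Equiv.swap (0 : Fin 2) 1) (Equiv.swap_mul_self 0 1)).comp φ)

noncomputable def pairRepBasis (f g : (Fin 1 → k) →ₗ[k] (Fin 1 → k)) :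
    Module.Basis (Fin 2) k (pairRep k (Fin 1) (Fin 1) f g).asModule :=
  basisOfLinearIndependentOfCardEqFinrank
    (b := ![(pairRep k _ _ f g).asModuleEquiv.symm (1, 0),
      (pairRep k _ _ f g).asModuleEquiv.symm (1, 1)])
    (LinearIndependent.pair_iff.2 fun s t h => by
      have h₁ := congrArg (fun x => x.1 0) h
      have h₂ := congrArg (fun x => x.2 0) h
      simp only [Representation.asModule_add_fst, Representation.asModule_add_snd,
        Representation.asModule_smul_fst, Representation.asModule_smul_snd,
        Representation.asModuleEquiv_symm_fst, Representation.asModuleEquiv_symm_snd,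
        Pi.add_apply, Pi.smul_apply, Pi.one_apply, Pi.zero_apply, smul_eq_mul, mul_one, mul_zero,
        zero_add] at h₁ h₂
      change s + t = 0 at h₁
      change t = 0 at h₂
      exact ⟨by simpa [h₂] using h₁, h₂⟩)
    (by rw [(pairRep k _ _ f g).asModuleEquiv.finrank_eq]; simp)

lemma pairRepBasis_apply (f g : (Fin 1 → k) →ₗ[k] (Fin 1 → k)) (i : Fin 2) :
    pairRepBasis f g i = (pairRep k _ _ f g).asModuleEquiv.symm (1, ![0, 1] i) := by
  fin_cases i <;> simp [pairRepBasis]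

lemma hasPermBasis_pairRep_zero_id :
    HasPermBasis k (pairRep k (Fin 1) (Fin 1) 0 LinearMap.id).asModule := by
  let := swapAction (MonoidHom.snd (Multiplicative (ZMod 2)) (Multiplicative (ZMod 2)))
  refine ⟨Fin 2, inferInstance, inferInstance, pairRepBasis 0 LinearMap.id,
    of_smul_eq_of_sigma4_tau4 _ (fun i => ?_) (fun i => ?_)⟩
  · change _ = pairRepBasis _ _ (involHom (Equiv.swap (0 : Fin 2) 1) (Equiv.swap_mul_self 0 1) 1 i)
    rw [map_one, Equiv.Perm.one_apply, of_sigma4_eq, add_smul, one_smul]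
    refine Prod.ext (funext fun j => ?_) (funext fun j => ?_) <;>
      simp [aElt_smul_pairRep, pairRepBasis_apply]
  · change _ = pairRepBasis _ _
      (involHom (Equiv.swap (0 : Fin 2) 1) (Equiv.swap_mul_self 0 1) (ofAdd 1) i)
    rw [involHom_ofAdd_one, of_tau4_eq, add_smul, one_smul]
    refine Prod.ext (funext fun j => ?_) (funext fun j => ?_) <;>
      fin_cases i <;> simp [bElt_smul_pairRep, pairRepBasis_apply, CharTwo.add_self_eq_zero]

lemma hasPermBasis_pairRep_id_zero :
    HasPermBasis k (pairRep k (Fin 1) (Fin 1) LinearMap.id 0).asModule := by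
  let := swapAction (MonoidHom.fst (Multiplicative (ZMod 2)) (Multiplicative (ZMod 2)))
  refine ⟨Fin 2, inferInstance, inferInstance, pairRepBasis LinearMap.id 0,
    of_smul_eq_of_sigma4_tau4 _ (fun i => ?_) (fun i => ?_)⟩
  · change _ = pairRepBasis _ _
      (involHom (Equiv.swap (0 : Fin 2) 1) (Equiv.swap_mul_self 0 1) (ofAdd 1) i)
    rw [involHom_ofAdd_one, of_sigma4_eq, add_smul, one_smul]
    refine Prod.ext (funext fun j => ?_) (funext fun j => ?_) <;>
      fin_cases i <;> simp [aElt_smul_pairRep, pairRepBasis_apply, CharTwo.add_self_eq_zero]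
  · change _ = pairRepBasis _ _ (involHom (Equiv.swap (0 : Fin 2) 1) (Equiv.swap_mul_self 0 1) 1 i)
    rw [map_one, Equiv.Perm.one_apply, of_tau4_eq, add_smul, one_smul]
    refine Prod.ext (funext fun j => ?_) (funext fun j => ?_) <;>
      simp [bElt_smul_pairRep, pairRepBasis_apply]

/-- `E_∞ ≅ k[V₄/⟨σ⟩]`, with permuted basis `u, u + v`. -/
lemma hasPermBasis_einfMod : HasPermBasis k (EinfMod k) := by
  change HasPermBasis k (pairRep k (Fin 1) (Fin 1) (EinfaMap k 1) LinearMap.id).asModule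
  rw [EinfaMap_one]
  exact hasPermBasis_pairRep_zero_id

/-- `E_t ≅ k[V₄/⟨τ⟩]`, with permuted basis `u, u + v`. -/
lemma hasPermBasis_etMod : HasPermBasis k (EtMod k) := by
  change HasPermBasis k (pairRep k (Fin 1) (Fin 1) LinearMap.id (EbMap k 1 0)).asModule
  rw [EbMap_one_zero]
  exact hasPermBasis_pairRep_id_zero

end TwoPoint

section Cover

variable {k : Type} [Field k] [CharP k 2]

noncomputable def w3Cover : EinfMod k × EtMod k →ₗ[kV4 k] Wmod k 1 :=
  LinearMap.toKV4
    ((WRep k 1).asModuleEquiv.symm.toLinearMap ∘ₗ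
      { toFun := fun p => (![p.1.1 0, p.2.1 0], fun _ => p.1.2 0 + p.2.2 0)
        map_add' := fun p q => by
          refine Prod.ext (funext fun i => ?_) (funext fun _ => ?_)
          · fin_cases i <;> simp
          · simp only [Prod.fst_add, Prod.snd_add, Representation.asModule_add_snd, Pi.add_apply]
            ring
        map_smul' := fun c p => by
          refine Prod.ext (funext fun i => ?_) (funext fun _ => ?_)
          · fin_cases i <;> simp
          · simp [mul_add] })
    (fun p => by
      refine Prod.ext (funext fun i => ?_) (funext fun _ => ?_)
      · fin_cases i <;> simp [aElt_smul_einfMod, aElt_smul_etMod, aElt_smul_wmod]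
      · simp [aElt_smul_einfMod, aElt_smul_etMod, aElt_smul_wmod])
    (fun p => by
      refine Prod.ext (funext fun i => ?_) (funext fun j => ?_)
      · fin_cases i <;> simp [bElt_smul_einfMod, bElt_smul_etMod, bElt_smul_wmod]
      · obtain rfl := Subsingleton.elim j 0
        simp [bElt_smul_einfMod, bElt_smul_etMod, bElt_smul_wmod])

lemma w3Cover_apply (p : EinfMod k × EtMod k) :
    w3Cover p = (WRep k 1).asModuleEquiv.symm (![p.1.1 0, p.2.1 0], fun _ => p.1.2 0 + p.2.2 0) :=
  rfl

noncomputable def w3CoverKernel : trivMod k →ₗ[kV4 k] EinfMod k × EtMod k :=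
  let socle : trivMod k →ₗ[k] (Fin 1 → k) × (Fin 1 → k) :=
    LinearMap.inr k _ _ ∘ₗ LinearMap.pi fun _ => (Representation.trivial k V4 k).asModuleEquiv
  LinearMap.toKV4
    (((EinfRep k 1).asModuleEquiv.symm.toLinearMap ∘ₗ socle).prod
      ((ERep k 1 0).asModuleEquiv.symm.toLinearMap ∘ₗ socle))
    (fun c => by
      rw [aElt_smul_trivMod, map_zero, Prod.smul_def, aElt_smul_einfMod, aElt_smul_etMod]
      rfl)
    (fun c => by
      rw [bElt_smul_trivMod, map_zero, Prod.smul_def, bElt_smul_einfMod, bElt_smul_etMod]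
      rfl)

lemma w3CoverKernel_apply (c : trivMod k) :
    w3CoverKernel c =
      ((EinfRep k 1).asModuleEquiv.symm
          (0, fun _ => (Representation.trivial k V4 k).asModuleEquiv c),
        (ERep k 1 0).asModuleEquiv.symm
          (0, fun _ => (Representation.trivial k V4 k).asModuleEquiv c)) :=
  rfl

lemma w3CoverKernel_injective : Function.Injective (w3CoverKernel (k := k)) := by
  refine (injective_iff_map_eq_zero _).2 fun c hc => ?_
  simpa [w3CoverKernel_apply] using congrArg (fun p : EinfMod k × EtMod k => p.1.2 0) hc

lemma w3Cover_surjective : Function.Surjective (w3Cover (k := k)) := by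
  intro m
  refine ⟨((EinfRep k 1).asModuleEquiv.symm (fun _ => m.1 0, m.2),
    (ERep k 1 0).asModuleEquiv.symm (fun _ => m.1 1, 0)),
    Prod.ext (funext fun i => ?_) (funext fun j => ?_)⟩
  · fin_cases i <;> simp [w3Cover_apply]
  · obtain rfl := Subsingleton.elim j 0
    simp [w3Cover_apply]

lemma exact_w3CoverKernel_w3Cover : Function.Exact (w3CoverKernel (k := k)) w3Cover := by
  intro p
  constructor
  · intro hp
    have h₀ : p.1.1 0 = 0 := by simpa [w3Cover_apply] using congrArg (fun m : Wmod k 1 => m.1 0) hp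
    have h₁ : p.2.1 0 = 0 := by simpa [w3Cover_apply] using congrArg (fun m : Wmod k 1 => m.1 1) hp
    have h₂ : p.1.2 0 + p.2.2 0 = 0 := by
      simpa [w3Cover_apply] using congrArg (fun m : Wmod k 1 => m.2 0) hp
    refine ⟨(Representation.trivial k V4 k).asModuleEquiv.symm (p.1.2 0), ?_⟩
    rw [w3CoverKernel_apply, LinearEquiv.apply_symm_apply]
    refine Prod.ext (Prod.ext (funext fun j => ?_) (funext fun j => ?_))
      (Prod.ext (funext fun j => ?_) (funext fun j => ?_)) <;>
      obtain rfl := Subsingleton.elim j 0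
    · exact h₀.symm
    · rfl
    · exact h₁.symm
    · exact CharTwo.add_eq_zero.1 h₂
  · rintro ⟨c, rfl⟩
    refine Prod.ext (funext fun i => ?_) (funext fun j => ?_)
    · fin_cases i <;> simp [w3Cover_apply, w3CoverKernel_apply]
    · simp [w3Cover_apply, w3CoverKernel_apply, CharTwo.add_self_eq_zero]

end Cover

lemma LinearMap.exact_compLeft {R A B C : Type*} [Semiring R] [AddCommMonoid A] [AddCommMonoid B]
    [AddCommMonoid C] [Module R A] [Module R B] [Module R C] {f : A →ₗ[R] B} {g : B →ₗ[R] C}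
    (h : Function.Exact f g) (I : Type*) : Function.Exact (f.compLeft I) (g.compLeft I) := by
  intro y
  simp only [LinearMap.compLeft_apply, funext_iff, Function.comp_apply, Pi.zero_apply, h _,
    Set.mem_range]
  constructor
  · intro hy
    choose x hx using hy
    exact ⟨x, hx⟩
  · rintro ⟨x, hx⟩ i
    exact ⟨x i, hx i⟩

lemma ppdim_le_two {k M A P₀ P₁ P₂ : Type} [Field k] [AddCommMonoid M] [Module (kV4 k) M]
    [AddCommMonoid A] [Module (kV4 k) A] [AddCommMonoid P₀] [Module (kV4 k) P₀]
    [AddCommMonoid P₁] [Module (kV4 k) P₁] [AddCommMonoid P₂] [Module (kV4 k) P₂]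
    (hP₀ : IsPermMod k P₀) (hP₁ : IsPermMod k P₁) (hP₂ : IsPermMod k P₂)
    {f : A →ₗ[kV4 k] P₀} {g : P₀ →ₗ[kV4 k] M} {d : P₂ →ₗ[kV4 k] P₁} {h : P₁ →ₗ[kV4 k] A}
    (hf : Function.Injective f) (hg : Function.Surjective g) (hfg : Function.Exact f g)
    (hd : Function.Injective d) (hh : Function.Surjective h) (hdh : Function.Exact d h) :
    ppdim k M ≤ 2 := by
  refine Nat.sInf_le ⟨{
    P := fun | 0 => P₀ | 1 => P₁ | 2 => P₂ | _ + 3 => PUnit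
    acm := fun | 0 | 1 | 2 | _ + 3 => inferInstance
    mod := fun | 0 | 1 | 2 | _ + 3 => inferInstance
    d := fun | 0 => f ∘ₗ h | 1 => d | _ + 2 => 0
    ε := g
    perm := fun | 0 => hP₀ | 1 => hP₁ | 2 => hP₂ | _ + 3 => hasPermBasis_punit.isPermMod
    surj := hg
    exact_zero := by
      rw [LinearMap.range_comp_of_range_eq_top f (LinearMap.range_eq_top.2 hh)]
      exact LinearMap.exact_iff.1 hfg
    exact_succ := fun
      | 0 => by
        rw [LinearMap.ker_comp_of_ker_eq_bot h (LinearMap.ker_eq_bot_of_injective hf)]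
        exact LinearMap.exact_iff.1 hdh
      | 1 => by
        rw [LinearMap.ker_eq_bot_of_injective hd]
        exact LinearMap.range_zero.symm
      | _ + 2 => Subsingleton.elim _ _
    bounded := fun
      | 0, h, _ | 1, h, _ | 2, h, _ => absurd h (by omega)
      | _ + 3, _, x => Subsingleton.elim x 0 }⟩

theorem stmt13_general (k : Type) [Field k] [CharP k 2] (n : ℕ) :
    SES k (Fin (n + 1) → Wmod k 1) ((Fin n → trivMod k) × (Fin (n + 1) → kV4 k)) (Wmod k n) ∧
    ppdim k (Wmod k n) ≤ 2 :=
  ⟨⟨wSyzygy, wPresentation, wSyzygy_injective, wPresentation_surjective,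
      (LinearMap.exact_iff.1 exact_wSyzygy_wPresentation).symm⟩,
    ppdim_le_two ((hasPermBasis_trivMod.pi _).prod (hasPermBasis_kV4.pi _)).isPermMod
      ((hasPermBasis_einfMod.prod hasPermBasis_etMod).pi _).isPermMod
      (hasPermBasis_trivMod.pi _).isPermMod
      wSyzygy_injective wPresentation_surjective exact_wSyzygy_wPresentation
      (d := w3CoverKernel.compLeft (Fin (n + 1))) (h := w3Cover.compLeft (Fin (n + 1)))
      w3CoverKernel_injective.comp_left w3Cover_surjective.comp_left
      (LinearMap.exact_compLeft exact_w3CoverKernel_w3Cover _)⟩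

theorem stmt13 (k : Type) [Field k] [CharP k 2] (n : ℕ) (hn : 3 ≤ n) :
    SES k (Fin (n + 1) → Wmod k 1) ((Fin n → trivMod k) × (Fin (n + 1) → kV4 k)) (Wmod k n) ∧
    ppdim k (Wmod k n) ≤ 2 :=
  stmt13_general k n
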